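/- Let q ∈ [1,∞], K ≥ 1, n₁,…,n_K > 0, λ₁, λ₂ ≥ 0, let S¹,…,Sᴷ be symmetric p×p real matrices, let (I₁,…,I_L) be a partition of {1,…,p}, and let T = ∪_{l=1}^L I_l × I_l. Suppose Θ̂¹,…,Θ̂ᴷ are symmetric positive definite p×p matrices that minimize the CNJGL objective F(Θ¹,…,Θᴷ) = Σ_{k=1}^K n_k(−log det Θᵏ + trace(SᵏΘᵏ)) + λ₁ Σ_{k=1}^K Σ_{i,j}|Θᵏ_{ij}| + λ₂ Ω_q(Θ¹ − diag(Θ¹),…,Θᴷ − diag(Θᴷ)) over all K-tuples of symmetric positive definite matrices, and that each Θ̂ᵏ is supported on T. Then n_k|Sᵏ_{ij}| ≤ λ₁ + λ₂/2 for all (i,j) ∈ T^c and all k = 1,…,K. -/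

import Mathlib

open Matrix
open scoped ENNReal BigOperators

/-- The ℓ_q norm of a finitely-indexed real vector, for q ∈ [0,∞]
(the maximum absolute entry when q = ∞). -/
noncomputable def lqNorm (q : ℝ≥0∞) {ι : Type*} [Fintype ι] (x : ι → ℝ) : ℝ :=
  ‖(WithLp.equiv q (ι → ℝ)).symm x‖

/-- The row-column overlap norm Ω_q of a K-tuple of p×p real matrices:
the infimum of Σ_j ‖([V¹;…;Vᴷ])_j‖_q over all decompositions Θᵏ = Vᵏ + (Vᵏ)ᵀ. -/
noncomputable def rcon (q : ℝ≥0∞) (K p : ℕ)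
    (Θ : Fin K → Matrix (Fin p) (Fin p) ℝ) : ℝ :=
  sInf { r : ℝ | ∃ V : Fin K → Matrix (Fin p) (Fin p) ℝ,
    (∀ k, Θ k = V k + (V k)ᵀ) ∧
    r = ∑ j : Fin p, lqNorm q (fun ki : Fin K × Fin p => V ki.1 ki.2 j) }

/-- The row-column overlap norm Ω_q of a single p×p matrix (the case K = 1). -/
noncomputable def rcon1 (q : ℝ≥0∞) {p : ℕ} (Θ : Matrix (Fin p) (Fin p) ℝ) : ℝ :=
  sInf { r : ℝ | ∃ V : Matrix (Fin p) (Fin p) ℝ,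
    Θ = V + Vᵀ ∧ r = ∑ j : Fin p, lqNorm q (fun i => V i j) }

/-- The CNJGL objective for K precision matrices:
Σ_k n_k(−log det Θᵏ + trace(SᵏΘᵏ)) + λ₁ Σ_k Σ_{i,j}|Θᵏ_{ij}|
  + λ₂ Ω_q(Θ¹ − diag(Θ¹),…,Θᴷ − diag(Θᴷ)). -/
noncomputable def cnjglObj {K p : ℕ} (q : ℝ≥0∞) (n : Fin K → ℝ)
    (lam₁ lam₂ : ℝ) (S : Fin K → Matrix (Fin p) (Fin p) ℝ)
    (Θ : Fin K → Matrix (Fin p) (Fin p) ℝ) : ℝ :=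
  (∑ k : Fin K, n k * (-Real.log (Θ k).det + (S k * Θ k).trace))
    + lam₁ * (∑ k : Fin K, ∑ i : Fin p, ∑ j : Fin p, |Θ k i j|)
    + lam₂ * rcon q K p (fun k => Θ k - Matrix.diagonal fun i => Θ k i i)

/-
Perturb the k-th matrix of the minimizer in the direction E = e_i e_jᵀ + e_j e_iᵀ of an
off-block entry (i, j). Since Θ̂ᵏ is block diagonal, so is its inverse, hence the derivative
tr((Θ̂ᵏ)⁻¹E) of log det vanishes and the smooth part of the objective changes at first order
by 2u·n_k·Sᵏ_{ij}. Because Θ̂ᵏ_{ij} = Θ̂ᵏ_{ji} = 0, the ℓ₁ penalty grows by exactly 2λ₁|u|, and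
the RCON penalty by at most λ₂|u| (it is subadditive, and uE = V + Vᵀ with V having a single
nonzero entry u). Minimality at u = 0 then forces 2n_k|Sᵏ_{ij}| ≤ 2λ₁ + λ₂.
-/

open Filter Topology

theorem HasDerivAt.abs_le_of_isLocalMin_add_abs {h : ℝ → ℝ} {h' c x : ℝ}
    (hh : HasDerivAt h h' x) (hmin : IsLocalMin (fun u => h u + c * |u - x|) x) :
    |h'| ≤ c := by
  have hslope : ∀ᶠ u in 𝓝[≠] x, -c * |u - x| ≤ slope h x u * (u - x) := by
    filter_upwards [nhdsWithin_le_nhds hmin, self_mem_nhdsWithin] with u hu hne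
    rw [slope_def_field, div_mul_cancel₀ _ (sub_ne_zero.mpr hne)]
    simp only [sub_self, abs_zero, mul_zero, add_zero] at hu
    linarith
  have hright : -c ≤ h' := by
    refine ge_of_tendsto (hh.tendsto_slope.mono_left (nhdsGT_le_nhdsNE x)) ?_
    filter_upwards [nhdsGT_le_nhdsNE x hslope, self_mem_nhdsWithin] with u hu hxu
    have hpos : 0 < u - x := sub_pos.mpr hxu
    rw [abs_of_pos hpos] at hu
    exact le_of_mul_le_mul_right (by linarith) hpos
  have hleft : h' ≤ c := by
    refine le_of_tendsto (hh.tendsto_slope.mono_left (nhdsLT_le_nhdsNE x)) ?_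
    filter_upwards [nhdsLT_le_nhdsNE x hslope, self_mem_nhdsWithin] with u hu hux
    have hneg : u - x < 0 := sub_neg.mpr hux
    rw [abs_of_neg hneg] at hu
    nlinarith
  exact abs_le.mpr ⟨by linarith, hleft⟩

theorem exists_labeling_of_existsUnique_mem {α ι : Type*} {I : ι → Finset α}
    (hI : ∀ a, ∃! l, a ∈ I l) : ∃ c : α → ι, ∀ a b, (∃ l, a ∈ I l ∧ b ∈ I l) ↔ c a = c b := by
  choose c hc using fun a => (hI a).exists
  refine ⟨c, fun a b => ⟨fun ⟨l, ha, hb⟩ => ?_, fun hab => ⟨c a, hc a, hab ▸ hc b⟩⟩⟩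
  exact ((hI a).unique (hc a) ha).trans ((hI b).unique hb (hc b))

theorem Fintype.sum_apply_add_single {ι M β : Type*} [Fintype ι] [DecidableEq ι]
    [AddCommMonoid M] [AddCommGroup β] (f : ι → M → β) (x : ι → M) (k : ι) (m : M) :
    ∑ i, f i ((x + Pi.single k m : ι → M) i) = ∑ i, f i (x i) + (f k (x k + m) - f k (x k)) := by
  rw [← sub_eq_iff_eq_add', ← Finset.sum_sub_distrib, Fintype.sum_eq_single k]
  · simp
  · intro i hi
    simp [Pi.single_eq_of_ne hi]

namespace Matrix

section Inverse

variable {n R : Type*} [Fintype n] [DecidableEq n] [CommRing R]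

theorem commute_nonsing_inv_right {A M : Matrix n n R} (h : Commute A M) : Commute A M⁻¹ := by
  by_cases hM : IsUnit M.det
  · lift M to (Matrix n n R)ˣ using (isUnit_iff_isUnit_det M).mpr hM
    rw [← coe_units_inv]
    exact h.units_inv_right
  · rw [nonsing_inv_apply_not_isUnit _ hM]
    exact Commute.zero_right A

theorem nonsing_inv_apply_eq_zero_of_block {ι : Type*} [DecidableEq ι] (c : n → ι)
    {M : Matrix n n R} (hM : ∀ a b, c a ≠ c b → M a b = 0) {a b : n} (hab : c a ≠ c b) :
    M⁻¹ a b = 0 := by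
  -- `M` commutes with the projection onto the block of `a`, hence so does `M⁻¹`.
  let D : Matrix n n R := diagonal fun x => if c x = c a then 1 else 0
  have hDM : Commute D M := by
    ext x y
    rw [diagonal_mul, mul_diagonal]
    by_cases hxy : c x = c y
    · rw [hxy, mul_comm]
    · rw [hM x y hxy]; ring
  have := congr_fun (congr_fun (commute_nonsing_inv_right hDM).eq a) b
  rw [diagonal_mul, mul_diagonal, if_pos rfl, if_neg (Ne.symm hab)] at this
  simpa using this

end Inverse

section Jacobi

open Polynomial

variable {n 𝕜 : Type*} [Fintype n] [DecidableEq n] [NontriviallyNormedField 𝕜]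

theorem hasDerivAt_det_one_add_smul (N : Matrix n n 𝕜) :
    HasDerivAt (fun u : 𝕜 => (1 + u • N).det) N.trace 0 := by
  let P := (det (1 + (X : 𝕜[X]) • N.map C)).divX.divX
  have hexpand : (fun u : 𝕜 => (1 + u • N).det) =
      fun u => 1 + N.trace * u + P.eval u * u ^ 2 :=
    funext fun u => det_one_add_smul u N
  rw [hexpand]
  refine ((((hasDerivAt_id (0 : 𝕜)).const_mul N.trace).const_add 1).add
    ((P.hasDerivAt 0).mul (hasDerivAt_pow 2 (0 : 𝕜)))).congr_deriv ?_
  simp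

theorem hasDerivAt_det_add_smul {A : Matrix n n 𝕜} (hA : A.det ≠ 0) (E : Matrix n n 𝕜) :
    HasDerivAt (fun u : 𝕜 => (A + u • E).det) (A.det * (A⁻¹ * E).trace) 0 := by
  have hfactor : ∀ u : 𝕜, A + u • E = A * (1 + u • (A⁻¹ * E)) := fun u => by
    rw [mul_add, mul_one, mul_smul_comm, mul_nonsing_inv_cancel_left _ _ hA.isUnit]
  simp only [hfactor, det_mul]
  exact (hasDerivAt_det_one_add_smul _).const_mul _

theorem hasDerivAt_log_det_add_smul {A : Matrix n n ℝ} (hA : A.det ≠ 0) (E : Matrix n n ℝ) :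
    HasDerivAt (fun u : ℝ => Real.log (A + u • E).det) (A⁻¹ * E).trace 0 := by
  convert (hasDerivAt_det_add_smul hA E).log (by simpa using hA) using 1
  simp [hA]

end Jacobi

section PositiveDefinite

variable {n : Type*} [Fintype n]

theorem PosDef.eventually_posDef {A : Matrix n n ℝ} (hA : A.PosDef) :
    ∀ᶠ B in 𝓝 A, B.IsHermitian → B.PosDef := by
  -- Positivity on the compact unit sphere is an open condition, and the form is homogeneous.
  have hquad : Continuous fun z : Matrix n n ℝ × (n → ℝ) => z.2 ⬝ᵥ (z.1 *ᵥ z.2) :=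
    continuous_snd.dotProduct (continuous_fst.matrix_mulVec continuous_snd)
  have hsphere : ∀ᶠ B in 𝓝 A, ∀ x ∈ Metric.sphere (0 : n → ℝ) 1, 0 < x ⬝ᵥ (B *ᵥ x) := by
    refine (isCompact_sphere 0 1).eventually_forall_of_forall_eventually fun x hx => ?_
    have hx0 : x ≠ 0 := ne_zero_of_mem_unit_sphere ⟨x, hx⟩
    exact hquad.continuousAt.eventually (lt_mem_nhds (by simpa using hA.dotProduct_mulVec_pos hx0))
  filter_upwards [hsphere] with B hB hherm
  refine PosDef.of_dotProduct_mulVec_pos hherm fun x hx => ?_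
  have hnorm : 0 < ‖x‖ := norm_pos_iff.mpr hx
  have := hB (‖x‖⁻¹ • x) (by simp [norm_smul, hnorm.ne'])
  rw [mulVec_smul, dotProduct_smul, smul_dotProduct, smul_eq_mul, smul_eq_mul] at this
  simpa using (mul_pos_iff_of_pos_left (by positivity)).mp
    ((mul_pos_iff_of_pos_left (by positivity)).mp this)

theorem PosDef.eventually_add_smul {A E : Matrix n n ℝ} (hA : A.PosDef) (hE : E.IsSymm) :
    ∀ᶠ u in 𝓝 (0 : ℝ), (A + u • E).PosDef := by
  have hpath : Tendsto (fun u : ℝ => A + u • E) (𝓝 0) (𝓝 A) := by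
    have hcont : Continuous fun u : ℝ => A + u • E := by fun_prop
    simpa using hcont.tendsto 0
  filter_upwards [hpath.eventually hA.eventually_posDef] with u hu
  exact hu (isHermitian_iff_isSymm.mpr ((isHermitian_iff_isSymm.mp hA.isHermitian).add (hE.smul u)))

end PositiveDefinite

section SymmSingle

variable {n R : Type*} [DecidableEq n]

def symmSingle [Zero R] [One R] [Add R] (i j : n) : Matrix n n R :=
  single i j 1 + single j i 1

variable [CommRing R] {i j : n}

theorem isSymm_symmSingle (i j : n) : (symmSingle i j : Matrix n n R).IsSymm := by
  simp [IsSymm, symmSingle, add_comm]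

theorem symmSingle_apply_self (hij : i ≠ j) (a : n) : (symmSingle i j : Matrix n n R) a a = 0 := by
  simp only [symmSingle, add_apply, single_apply]
  grind

theorem trace_mul_symmSingle [Fintype n] (S : Matrix n n R) (i j : n) :
    (S * symmSingle i j).trace = S j i + S i j := by
  simp [symmSingle, mul_add, trace_mul_single]

theorem sum_sum_abs_add_smul_symmSingle [Fintype n] {A : Matrix n n ℝ} (hij : i ≠ j)
    (hAij : A i j = 0) (hAji : A j i = 0) (u : ℝ) :
    ∑ a, ∑ b, |(A + u • symmSingle i j : Matrix n n ℝ) a b| = ∑ a, ∑ b, |A a b| + 2 * |u| := by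
  have hentry : ∀ a b,
      |(A + u • symmSingle i j : Matrix n n ℝ) a b| = |A a b| + |u| * symmSingle i j a b := by
    intro a b
    by_cases hab : a = i ∧ b = j
    · obtain ⟨rfl, rfl⟩ := hab
      simp [symmSingle, hij, hAij]
    by_cases hba : a = j ∧ b = i
    · obtain ⟨rfl, rfl⟩ := hba
      simp [symmSingle, Ne.symm hij, hAji]
    have hE : (symmSingle i j : Matrix n n ℝ) a b = 0 := by
      simp only [symmSingle, add_apply, single_apply]
      grind
    simp [hE]
  simp only [hentry, Finset.sum_add_distrib, ← Finset.mul_sum]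
  simp [symmSingle, single_apply, ite_and, Finset.sum_add_distrib]
  ring

end SymmSingle

end Matrix

open Matrix

section RowColumnOverlap

variable (q : ℝ≥0∞) {K p : ℕ}

theorem lqNorm_nonneg [Fact (1 ≤ q)] {ι : Type*} [Fintype ι] (x : ι → ℝ) : 0 ≤ lqNorm q x :=
  norm_nonneg _

theorem lqNorm_add_le [Fact (1 ≤ q)] {ι : Type*} [Fintype ι] (x y : ι → ℝ) :
    lqNorm q (x + y) ≤ lqNorm q x + lqNorm q y :=
  norm_add_le _ _

theorem lqNorm_single [Fact (1 ≤ q)] {ι : Type*} [Fintype ι] [DecidableEq ι] (a : ι) (t : ℝ) :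
    lqNorm q (Pi.single a t) = |t| := by
  simp [lqNorm]

theorem lqNorm_zero [Fact (1 ≤ q)] {ι : Type*} [Fintype ι] : lqNorm q (0 : ι → ℝ) = 0 := by
  simp [lqNorm]

noncomputable def rconCost (V : Fin K → Matrix (Fin p) (Fin p) ℝ) : ℝ :=
  ∑ j : Fin p, lqNorm q (fun ki : Fin K × Fin p => V ki.1 ki.2 j)

theorem rcon_le [Fact (1 ≤ q)] {Θ V : Fin K → Matrix (Fin p) (Fin p) ℝ}
    (hV : ∀ k, Θ k = V k + (V k)ᵀ) : rcon q K p Θ ≤ rconCost q V :=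
  csInf_le ⟨0, by rintro r ⟨W, -, rfl⟩; exact Finset.sum_nonneg fun j _ => lqNorm_nonneg q _⟩
    ⟨V, hV, rfl⟩

theorem le_rcon {Θ : Fin K → Matrix (Fin p) (Fin p) ℝ} (hΘ : ∀ k, (Θ k).IsSymm) {a : ℝ}
    (h : ∀ V : Fin K → Matrix (Fin p) (Fin p) ℝ, (∀ k, Θ k = V k + (V k)ᵀ) → a ≤ rconCost q V) :
    a ≤ rcon q K p Θ := by
  refine le_csInf ⟨_, fun k => (2⁻¹ : ℝ) • Θ k, fun k => ?_, rfl⟩ ?_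
  · rw [transpose_smul, (hΘ k).eq, ← add_smul]; norm_num
  · rintro r ⟨V, hV, rfl⟩
    exact h V hV

theorem rconCost_add_le [Fact (1 ≤ q)] (V W : Fin K → Matrix (Fin p) (Fin p) ℝ) :
    rconCost q (V + W) ≤ rconCost q V + rconCost q W := by
  rw [rconCost, rconCost, rconCost, ← Finset.sum_add_distrib]
  exact Finset.sum_le_sum fun j _ => lqNorm_add_le q _ _

theorem rcon_add_le [Fact (1 ≤ q)] {A B : Fin K → Matrix (Fin p) (Fin p) ℝ}
    (hA : ∀ k, (A k).IsSymm) (hB : ∀ k, (B k).IsSymm) :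
    rcon q K p (A + B) ≤ rcon q K p A + rcon q K p B := by
  rw [← sub_le_iff_le_add]
  refine le_rcon q hA fun V hV => ?_
  rw [sub_le_comm]
  refine le_rcon q hB fun W hW => ?_
  rw [sub_le_iff_le_add']
  refine (rcon_le q fun k => ?_).trans (rconCost_add_le q V W)
  simp only [Pi.add_apply, hV k, hW k, transpose_add]
  abel

theorem rcon_single_smul_symmSingle_le [Fact (1 ≤ q)] (k : Fin K)
    (i j : Fin p) (u : ℝ) : rcon q K p (Pi.single k (u • symmSingle i j)) ≤ |u| := by
  let V : Fin K → Matrix (Fin p) (Fin p) ℝ := Pi.single k (single i j u)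
  have hdecomp : ∀ k', (Pi.single k (u • symmSingle i j) : Fin K → Matrix (Fin p) (Fin p) ℝ) k' =
      V k' + (V k')ᵀ := by
    intro k'
    by_cases hk : k' = k
    · subst hk
      simp [V, symmSingle, smul_add, smul_single]
    · simp [V, Pi.single_eq_of_ne hk]
  have hcol : ∀ j', (fun ki : Fin K × Fin p => V ki.1 ki.2 j') =
      Pi.single (k, i) (if j = j' then u else 0) := by
    intro j'
    funext ⟨k', a⟩
    by_cases hk : k' = k
    · subst hk
      simp only [V, Pi.single_eq_same, single_apply, Pi.single_apply, Prod.mk.injEq, true_and]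
      grind
    · simp [V, hk]
  calc rcon q K p (Pi.single k (u • symmSingle i j))
      ≤ rconCost q V := rcon_le q hdecomp
    _ = |u| := by simp [rconCost, hcol, lqNorm_single, lqNorm_zero, apply_ite]

end RowColumnOverlap

noncomputable def gaussNegLogLik {p : ℕ} (n : ℝ) (S M : Matrix (Fin p) (Fin p) ℝ) : ℝ :=
  n * (-Real.log M.det + (S * M).trace)

theorem hasDerivAt_gaussNegLogLik_add_smul {p : ℕ} (n : ℝ) (S : Matrix (Fin p) (Fin p) ℝ)
    {A : Matrix (Fin p) (Fin p) ℝ} (hA : A.det ≠ 0) (E : Matrix (Fin p) (Fin p) ℝ) :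
    HasDerivAt (fun u : ℝ => gaussNegLogLik n S (A + u • E))
      (n * (-(A⁻¹ * E).trace + (S * E).trace)) 0 := by
  have htrace : ∀ u : ℝ, (S * (A + u • E)).trace = (S * A).trace + u * (S * E).trace := by
    intro u
    rw [mul_add, mul_smul_comm, trace_add, trace_smul, smul_eq_mul]
  simp only [gaussNegLogLik, htrace]
  exact (((hasDerivAt_log_det_add_smul hA E).neg.add
    (((hasDerivAt_id' (0 : ℝ)).mul_const (S * E).trace).const_add (S * A).trace)).const_mul
      n).congr_deriv (by ring)

theorem cnjglObj_add_single_le (q : ℝ≥0∞) [Fact (1 ≤ q)] {K p : ℕ} (n : Fin K → ℝ)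
    (lam₁ : ℝ) {lam₂ : ℝ} (hlam₂ : 0 ≤ lam₂) (S : Fin K → Matrix (Fin p) (Fin p) ℝ)
    {Θ : Fin K → Matrix (Fin p) (Fin p) ℝ} (hΘ : ∀ k, (Θ k).IsSymm) (k : Fin K) {i j : Fin p}
    (hij : i ≠ j) (hΘij : Θ k i j = 0) (hΘji : Θ k j i = 0) (u : ℝ) :
    cnjglObj q n lam₁ lam₂ S (Θ + Pi.single k (u • symmSingle i j)) ≤
      cnjglObj q n lam₁ lam₂ S Θ + (gaussNegLogLik (n k) (S k) (Θ k + u • symmSingle i j) -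
        gaussNegLogLik (n k) (S k) (Θ k)) + (2 * lam₁ + lam₂) * |u| := by
  have hloss := Fintype.sum_apply_add_single (fun k' M => gaussNegLogLik (n k') (S k') M) Θ k
    (u • symmSingle i j)
  have hl1 := Fintype.sum_apply_add_single (fun _ M => ∑ a, ∑ b, |M a b|) Θ k
    (u • symmSingle i j)
  rw [sum_sum_abs_add_smul_symmSingle hij hΘij hΘji] at hl1
  set E : Fin K → Matrix (Fin p) (Fin p) ℝ := Pi.single k (u • symmSingle i j)
  have hoffDiag : (fun k' => (Θ + E) k' - diagonal fun a => (Θ + E) k' a a) =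
      (fun k' => Θ k' - diagonal fun a => Θ k' a a) + E := by
    funext k'
    by_cases hk : k' = k
    · subst hk
      simp [E, symmSingle_apply_self hij]
      abel
    · simp [E, Pi.single_eq_of_ne hk]
  have hrcon : rcon q K p (fun k' => (Θ + E) k' - diagonal fun a => (Θ + E) k' a a) ≤
      rcon q K p (fun k' => Θ k' - diagonal fun a => Θ k' a a) + |u| := by
    rw [hoffDiag]
    refine (rcon_add_le q (fun k' => ?_) (fun k' => ?_)).trans
      (add_le_add le_rfl (rcon_single_smul_symmSingle_le q k i j u))
    · exact (hΘ k').sub (isSymm_diagonal _)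
    · by_cases hk : k' = k
      · subst hk; simpa [E] using (isSymm_symmSingle i j).smul u
      · simp [E, Pi.single_eq_of_ne hk, isSymm_zero]
  unfold cnjglObj
  simp only [gaussNegLogLik] at hloss ⊢
  rw [hloss, hl1]
  linarith [mul_le_mul_of_nonneg_left hrcon hlam₂]

theorem isLocalMin_gaussNegLogLik_add_smul_symmSingle (q : ℝ≥0∞) [Fact (1 ≤ q)] {K p : ℕ}
    (n : Fin K → ℝ) (lam₁ : ℝ) {lam₂ : ℝ} (hlam₂ : 0 ≤ lam₂) (S : Fin K → Matrix (Fin p) (Fin p) ℝ)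
    {Θ : Fin K → Matrix (Fin p) (Fin p) ℝ} (hΘ : ∀ k, (Θ k).PosDef)
    (hmin : ∀ Ψ : Fin K → Matrix (Fin p) (Fin p) ℝ, (∀ k, (Ψ k).PosDef) →
      cnjglObj q n lam₁ lam₂ S Θ ≤ cnjglObj q n lam₁ lam₂ S Ψ)
    (k : Fin K) {i j : Fin p} (hij : i ≠ j) (hΘij : Θ k i j = 0) (hΘji : Θ k j i = 0) :
    IsLocalMin (fun u => gaussNegLogLik (n k) (S k) (Θ k + u • symmSingle i j) +
      (2 * lam₁ + lam₂) * |u - 0|) 0 := by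
  filter_upwards [(hΘ k).eventually_add_smul (isSymm_symmSingle i j)] with u hu
  have hposDef : ∀ k',
      ((Θ + Pi.single k (u • symmSingle i j) : Fin K → Matrix (Fin p) (Fin p) ℝ) k').PosDef := by
    intro k'
    by_cases hk : k' = k
    · subst hk; simpa using hu
    · simpa [Pi.single_eq_of_ne hk] using hΘ k'
  have := (hmin _ hposDef).trans <| cnjglObj_add_single_le q n lam₁ hlam₂ S
    (fun k' => isHermitian_iff_isSymm.mp (hΘ k').isHermitian) k hij hΘij hΘji u
  simp only [zero_smul, add_zero, sub_zero, abs_zero, mul_zero]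
  linarith

theorem cnjgl_necessary_general (K p L : ℕ) (q : ℝ≥0∞) (hq : 1 ≤ q)
    (n : Fin K → ℝ) (hn : ∀ k, 0 < n k)
    (lam₁ lam₂ : ℝ) (hlam₂ : 0 ≤ lam₂)
    (S : Fin K → Matrix (Fin p) (Fin p) ℝ) (hS : ∀ k, (S k).IsSymm)
    (I : Fin L → Finset (Fin p)) (hpart : ∀ i : Fin p, ∃! l, i ∈ I l)
    (Θ : Fin K → Matrix (Fin p) (Fin p) ℝ) (hΘ : ∀ k, (Θ k).PosDef)
    (hmin : ∀ Ψ : Fin K → Matrix (Fin p) (Fin p) ℝ, (∀ k, (Ψ k).PosDef) →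
      cnjglObj q n lam₁ lam₂ S Θ ≤ cnjglObj q n lam₁ lam₂ S Ψ)
    (hsupp : ∀ k, ∀ i j : Fin p, ¬ (∃ l, i ∈ I l ∧ j ∈ I l) → Θ k i j = 0) :
    ∀ k, ∀ i j : Fin p, ¬ (∃ l, i ∈ I l ∧ j ∈ I l) →
      n k * |S k i j| ≤ lam₁ + lam₂ / 2 := by
  have : Fact (1 ≤ q) := ⟨hq⟩
  intro k i j hij
  obtain ⟨c, hc⟩ := exists_labeling_of_existsUnique_mem hpart
  have hblock : ∀ a b, c a ≠ c b → Θ k a b = 0 := fun a b h => hsupp k a b ((hc a b).not.mpr h)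
  rw [hc] at hij
  have hinv : ((Θ k)⁻¹ * symmSingle i j).trace = 0 := by
    rw [trace_mul_symmSingle, nonsing_inv_apply_eq_zero_of_block c hblock (Ne.symm hij),
      nonsing_inv_apply_eq_zero_of_block c hblock hij, add_zero]
  have hderiv := hasDerivAt_gaussNegLogLik_add_smul (n k) (S k) (hΘ k).det_pos.ne' (symmSingle i j)
  rw [hinv, trace_mul_symmSingle, (hS k).apply i j] at hderiv
  have hbound := hderiv.abs_le_of_isLocalMin_add_abs <|
    isLocalMin_gaussNegLogLik_add_smul_symmSingle q n lam₁ hlam₂ S hΘ hmin k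
      (fun h => hij (congrArg c h)) (hblock i j hij) (hblock j i (Ne.symm hij))
  rw [neg_zero, zero_add, ← two_mul, abs_mul, abs_mul, abs_two, abs_of_pos (hn k)] at hbound
  linarith

/-- Theorem 4, necessary conditions for CNJGL: if the symmetric
positive definite minimizers Θ̂¹,…,Θ̂ᴷ of the CNJGL objective are supported on
T = ∪_l I_l × I_l for a partition (I_l), then n_k|Sᵏ_{ij}| ≤ λ₁ + λ₂/2 for all
(i,j) ∈ T^c and all k. -/
theorem cnjgl_necessary (K p L : ℕ) (hK : 1 ≤ K) (q : ℝ≥0∞) (hq : 1 ≤ q)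
    (n : Fin K → ℝ) (hn : ∀ k, 0 < n k)
    (lam₁ lam₂ : ℝ) (hlam₁ : 0 ≤ lam₁) (hlam₂ : 0 ≤ lam₂)
    (S : Fin K → Matrix (Fin p) (Fin p) ℝ) (hS : ∀ k, (S k).IsSymm)
    (I : Fin L → Finset (Fin p)) (hpart : ∀ i : Fin p, ∃! l, i ∈ I l)
    (Θ : Fin K → Matrix (Fin p) (Fin p) ℝ) (hΘ : ∀ k, (Θ k).PosDef)
    (hmin : ∀ Ψ : Fin K → Matrix (Fin p) (Fin p) ℝ, (∀ k, (Ψ k).PosDef) →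
      cnjglObj q n lam₁ lam₂ S Θ ≤ cnjglObj q n lam₁ lam₂ S Ψ)
    (hsupp : ∀ k, ∀ i j : Fin p, ¬ (∃ l, i ∈ I l ∧ j ∈ I l) → Θ k i j = 0) :
    ∀ k, ∀ i j : Fin p, ¬ (∃ l, i ∈ I l ∧ j ∈ I l) →
      n k * |S k i j| ≤ lam₁ + lam₂ / 2 :=
  cnjgl_necessary_general K p L q hq n hn lam₁ lam₂ hlam₂ S hS I hpart Θ hΘ hmin hsupp
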